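/- arXiv:1008.4167 — 2 statements merged into one kernel-verified Lean document; each statement's English description precedes it below -/
import Mathlib

section
/- Let β > 1 be a real number and let a be the β-expansion of β. Then: (i) every word v with B̂(v) ≤ β satisfies v ≤ a lexicographically; (ii) every word v with B̂(v) < β satisfies v < a lexicographically; (iii) for every k ≥ 1, B̂(σ^k a) < β and σ^k a < a lexicographically. -/
/-- The shift map iterated `k` times: `(shift k w) i = w (i + k)`,
so `shift k w = w_k w_{k+1} w_{k+2} …`. -/
def shift (k : ℕ) (w : ℕ → ℕ) : ℕ → ℕ := fun i => w (i + k)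

/-- Strict lexicographic order on infinite words: `v < w` iff there is an index `i`
with `v j = w j` for all `j < i` and `v i < w i`. -/
def LexLt (v w : ℕ → ℕ) : Prop := ∃ i, (∀ j < i, v j = w j) ∧ v i < w i

/-- Weak lexicographic order: `v ≤ w` iff `v < w` or `v = w`. -/
def LexLe (v w : ℕ → ℕ) : Prop := LexLt v w ∨ v = w

/-- A word is a bounded sequence of natural numbers. -/
def IsWord (w : ℕ → ℕ) : Prop := ∃ M, ∀ i, w i ≤ M

/-- `fword w β = ∑_{i ≥ 0} w_i β^{-(i+1)} = w_0/β + w_1/β² + …`. -/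
noncomputable def fword (w : ℕ → ℕ) (β : ℝ) : ℝ := ∑' i : ℕ, (w i : ℝ) / β ^ (i + 1)

open Classical in
/-- `B̂(w)`: zero for the zero word, and otherwise `inf {β > 1 : f_w(β) ≤ 1}`. -/
noncomputable def Bhat (w : ℕ → ℕ) : ℝ :=
  if w = fun _ => 0 then 0 else sInf {β : ℝ | 1 < β ∧ fword w β ≤ 1}

/-- `B̄(w) = sup_{j ≥ 0} B̂(σ^j w)`. -/
noncomputable def Bbar (w : ℕ → ℕ) : ℝ := ⨆ j : ℕ, Bhat (shift j w)

/-- The sequence `A_i` in the β-expansion of `β`: `A_0 = β`, `A_{i+1} = β (A_i - ⌊A_i⌋)`. -/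
noncomputable def betaA (β : ℝ) : ℕ → ℝ
  | 0 => β
  | i + 1 => β * (betaA β i - (⌊betaA β i⌋₊ : ℝ))

/-- The β-expansion of `β`: the word `a` with `a_i = ⌊A_i⌋`. -/
noncomputable def betaExp (β : ℝ) : ℕ → ℕ := fun i => ⌊betaA β i⌋₊

/-- The domain `W(β)` of the β-shift: all words `w` with `σ^k w < a` lexicographically
for every `k ≥ 0`, where `a` is the β-expansion of `β`. -/
def Wset (β : ℝ) : Set (ℕ → ℕ) :=
  {w | IsWord w ∧ ∀ k : ℕ, LexLt (shift k w) (betaExp β)}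

/-- `π` is a permutation of `{1, …, n}` (viewed as a map `ℕ → ℕ`). -/
def IsPerm (n : ℕ) (π : ℕ → ℕ) : Prop := Set.BijOn π (Set.Icc 1 n) (Set.Icc 1 n)

/-- The word `w` induces the permutation `π` of `{1, …, n}`: for all `1 ≤ i, j ≤ n`,
`π(i) < π(j)` iff `σ^{i-1} w < σ^{j-1} w` lexicographically. -/
def Induces (n : ℕ) (w : ℕ → ℕ) (π : ℕ → ℕ) : Prop :=
  ∀ i ∈ Set.Icc 1 n, ∀ j ∈ Set.Icc 1 n,
    (π i < π j ↔ LexLt (shift (i - 1) w) (shift (j - 1) w))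

/-- `π ∈ Al(Σ_β)`: some word in `W(β)` induces `π`. -/
def Allowed (β : ℝ) (n : ℕ) (π : ℕ → ℕ) : Prop := ∃ w ∈ Wset β, Induces n w π

/-- The shift-complexity `B(π) = inf {β > 1 : π ∈ Al(Σ_β)}`. -/
noncomputable def Bperm (n : ℕ) (π : ℕ → ℕ) : ℝ :=
  sInf {β : ℝ | 1 < β ∧ Allowed β n π}

/-- `ρ_m` is the permutation `1 m 2 (m-1) 3 (m-2) …` of `{1, …, m}`:
`ρ(2i-1) = i` and `ρ(2i) = m+1-i`. -/
def IsRho (m : ℕ) (ρ : ℕ → ℕ) : Prop :=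
  IsPerm m ρ ∧ (∀ i, 1 ≤ i → 2 * i - 1 ≤ m → ρ (2 * i - 1) = i) ∧
    (∀ i, 1 ≤ i → 2 * i ≤ m → ρ (2 * i) = m + 1 - i)

/-!
Everything is read off the series `f_w(β) = ∑ wᵢ β^{-(i+1)}`. Telescoping the recursion
`A_{i+1} = β (A_i - a_i)` gives `f_{σ^k a}(β) = A_k / β`; hence `f_a(β) = 1`, and
`f_{σ^k a}(β) < 1` for `k ≥ 1` because `A_k < β`. If `v` exceeds `a` lexicographically, first at
index `i`, then `vᵢ ≥ aᵢ + 1 > A_i` already pushes the first `i + 1` terms of `f_v(β)` above `1`.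
Finally `B̂(v) < β ↔ f_v(β) < 1`, since `f_v` is continuous and, for `v ≠ 0^∞`, strictly
decreasing on `(1, ∞)`; letting `β` decrease gives `B̂(v) ≤ β → f_v(β) ≤ 1`.
-/

open Filter Topology Set

section WordSeries

variable {w : ℕ → ℕ} {M : ℕ} {β γ : ℝ}

lemma hasSum_const_div_pow (c : ℝ) (hγ : 1 < γ) :
    HasSum (fun i : ℕ => c / γ ^ (i + 1)) (c / (γ - 1)) := by
  have hγ0 : 0 < γ := one_pos.trans hγ
  have hgeom := (hasSum_geometric_of_lt_one (inv_nonneg.2 hγ0.le)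
    (inv_lt_one_of_one_lt₀ hγ)).mul_left (c / γ)
  have hterm : (fun i : ℕ => c / γ ^ (i + 1)) = fun i => c / γ * γ⁻¹ ^ i := by
    ext i
    rw [pow_succ, inv_pow]
    field_simp
  have hsum : c / (γ - 1) = c / γ * (1 - γ⁻¹)⁻¹ := by
    field_simp [(sub_pos.2 hγ).ne']
  rwa [hterm, hsum]

lemma summable_fword (hM : ∀ i, w i ≤ M) (hγ : 1 < γ) :
    Summable fun i : ℕ => (w i : ℝ) / γ ^ (i + 1) := by
  have hγ0 : 0 < γ := one_pos.trans hγ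
  refine (hasSum_const_div_pow M hγ).summable.of_nonneg_of_le (fun i => by positivity)
    fun i => ?_
  gcongr
  exact_mod_cast hM i

lemma fword_le_div (hM : ∀ i, w i ≤ M) (hγ : 1 < γ) : fword w γ ≤ M / (γ - 1) := by
  have hγ0 : 0 < γ := one_pos.trans hγ
  refine hasSum_le (fun i => ?_) (summable_fword hM hγ).hasSum (hasSum_const_div_pow M hγ)
  gcongr
  exact_mod_cast hM i

lemma continuousOn_fword (hM : ∀ i, w i ≤ M) (hγ : 1 < γ) : ContinuousOn (fword w) (Ici γ) := by
  have hγ0 : 0 < γ := one_pos.trans hγ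
  refine continuousOn_tsum (fun i => ?_) (hasSum_const_div_pow M hγ).summable fun i x hx => ?_
  · exact continuousOn_const.div (continuousOn_pow _) fun x hx => by
      have : 0 < x := hγ0.trans_le hx
      positivity
  · have hx0 : 0 < x := hγ0.trans_le hx
    rw [Real.norm_of_nonneg (by positivity)]
    gcongr
    · exact_mod_cast hM i
    · exact hx

lemma continuousAt_fword (hM : ∀ i, w i ≤ M) (hβ : 1 < β) : ContinuousAt (fword w) β :=
  (continuousOn_fword hM (by linarith : 1 < (1 + β) / 2)).continuousAt
    (Ici_mem_nhds (by linarith))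

lemma fword_lt_fword (hM : ∀ i, w i ≤ M) (hw : w ≠ fun _ => 0) (hγ : 1 < γ) (hγβ : γ < β) :
    fword w β < fword w γ := by
  have hγ0 : 0 < γ := one_pos.trans hγ
  obtain ⟨i, hi⟩ := Function.ne_iff.1 hw
  have hwi : (0 : ℝ) < w i := by exact_mod_cast Nat.pos_of_ne_zero hi
  refine Summable.tsum_lt_tsum (i := i) (fun j => ?_) ?_ (summable_fword hM (hγ.trans hγβ))
    (summable_fword hM hγ)
  · gcongr
  · gcongr

lemma Bhat_lt_iff (hM : ∀ i, w i ≤ M) (hβ : 1 < β) : Bhat w < β ↔ fword w β < 1 := by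
  by_cases hw : w = fun _ => 0
  · subst hw
    simp [Bhat, fword, one_pos.trans hβ]
  rw [Bhat, if_neg hw]
  constructor
  · intro h
    have hS : {γ : ℝ | 1 < γ ∧ fword w γ ≤ 1}.Nonempty := by
      have hM0 : (0 : ℝ) ≤ M := M.cast_nonneg
      refine ⟨M + 2, by linarith, (fword_le_div hM (by linarith)).trans ?_⟩
      rw [div_le_one (by linarith)]
      linarith
    obtain ⟨γ, ⟨hγ, hγ1⟩, hγβ⟩ := exists_lt_of_csInf_lt hS h
    exact (fword_lt_fword hM hw hγ hγβ).trans_le hγ1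
  · intro h
    -- by continuity, `fword w γ < 1` still holds for some `γ ∈ (1, β)`
    have hev : ∀ᶠ γ in 𝓝[<] β, 1 < γ ∧ fword w γ < 1 := nhdsWithin_le_nhds <|
      (lt_mem_nhds hβ).and ((continuousAt_fword hM hβ).eventually (gt_mem_nhds h))
    obtain ⟨γ, ⟨hγ, hγ1⟩, hγβ⟩ := (hev.and self_mem_nhdsWithin).exists
    have hmem : γ ∈ {γ : ℝ | 1 < γ ∧ fword w γ ≤ 1} := ⟨hγ, hγ1.le⟩
    exact (csInf_le ⟨1, fun x hx => hx.1.le⟩ hmem).trans_lt hγβ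

lemma fword_le_one_of_Bhat_le (hM : ∀ i, w i ≤ M) (hβ : 1 < β) (h : Bhat w ≤ β) :
    fword w β ≤ 1 := by
  refine le_of_tendsto ((continuousAt_fword hM hβ).tendsto.mono_left nhdsWithin_le_nhds)
    (?_ : ∀ᶠ γ in 𝓝[>] β, fword w γ ≤ 1)
  filter_upwards [self_mem_nhdsWithin] with γ (hγ : β < γ)
  exact ((Bhat_lt_iff hM (hβ.trans hγ)).1 (h.trans_lt hγ)).le

end WordSeries

section BetaExpansion

variable {β : ℝ}

lemma betaA_nonneg (hβ : 0 ≤ β) : ∀ i, 0 ≤ betaA β i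
  | 0 => hβ
  | i + 1 => mul_nonneg hβ (sub_nonneg.2 (Nat.floor_le (betaA_nonneg hβ i)))

lemma betaA_succ_lt (hβ : 0 < β) (i : ℕ) : betaA β (i + 1) < β :=
  calc betaA β (i + 1) = β * (betaA β i - ⌊betaA β i⌋₊) := rfl
    _ < β * 1 := by gcongr; linarith [Nat.lt_floor_add_one (betaA β i)]
    _ = β := mul_one β

lemma betaA_le (hβ : 0 < β) : ∀ i, betaA β i ≤ β
  | 0 => le_rfl
  | i + 1 => (betaA_succ_lt hβ i).le

lemma betaExp_le_floor (hβ : 0 < β) (i : ℕ) : betaExp β i ≤ ⌊β⌋₊ :=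
  Nat.floor_le_floor (betaA_le hβ i)

lemma betaA_div_eq_sum_add (hβ : β ≠ 0) (k n : ℕ) :
    betaA β k / β = ∑ i ∈ Finset.range n, (betaExp β (k + i) : ℝ) / β ^ (i + 1)
      + betaA β (k + n) / β ^ (n + 1) := by
  induction n with
  | zero => simp
  | succ n ih =>
    rw [Finset.sum_range_succ, ih, add_assoc]
    congr 1
    change betaA β (k + n) / β ^ (n + 1) = (⌊betaA β (k + n)⌋₊ : ℝ) / β ^ (n + 1)
      + β * (betaA β (k + n) - ⌊betaA β (k + n)⌋₊) / β ^ (n + 1 + 1)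
    field_simp
    ring

lemma hasSum_shift_betaExp (hβ : 1 < β) (k : ℕ) :
    HasSum (fun i => (shift k (betaExp β) i : ℝ) / β ^ (i + 1)) (betaA β k / β) := by
  have hβ0 : 0 < β := one_pos.trans hβ
  rw [hasSum_iff_tendsto_nat_of_nonneg (fun i => by positivity)]
  have hrem : Tendsto (fun n : ℕ => betaA β (k + n) / β ^ (n + 1)) atTop (𝓝 0) := by
    refine squeeze_zero (fun n => div_nonneg (betaA_nonneg hβ0.le _) (by positivity))
      (fun n => ?_) (tendsto_inv_atTop_zero.comp (tendsto_pow_atTop_atTop_of_one_lt hβ))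
    calc betaA β (k + n) / β ^ (n + 1) ≤ β / β ^ (n + 1) := by gcongr; exact betaA_le hβ0 _
      _ = (β ^ n)⁻¹ := by rw [pow_succ]; field_simp
  convert (tendsto_const_nhds (x := betaA β k / β)).sub hrem using 1
  · ext n
    rw [betaA_div_eq_sum_add hβ0.ne' k n, add_sub_cancel_right]
    exact Finset.sum_congr rfl fun i _ => by rw [shift, Nat.add_comm]
  · rw [sub_zero]

lemma fword_shift_betaExp (hβ : 1 < β) (k : ℕ) :
    fword (shift k (betaExp β)) β = betaA β k / β :=
  (hasSum_shift_betaExp hβ k).tsum_eq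

lemma fword_betaExp (hβ : 1 < β) : fword (betaExp β) β = 1 :=
  (fword_shift_betaExp hβ 0).trans (div_self (one_pos.trans hβ).ne')

lemma one_lt_fword_of_lexLt {v : ℕ → ℕ} {M : ℕ} (hM : ∀ i, v i ≤ M) (hβ : 1 < β)
    (h : LexLt (betaExp β) v) : 1 < fword v β := by
  obtain ⟨i, hpre, hi⟩ := h
  have hβ0 : 0 < β := one_pos.trans hβ
  have hA : betaA β i < v i :=
    calc betaA β i < betaExp β i + 1 := Nat.lt_floor_add_one _
      _ ≤ v i := by exact_mod_cast hi
  calc 1 = ∑ j ∈ Finset.range i, (betaExp β j : ℝ) / β ^ (j + 1) + betaA β i / β ^ (i + 1) := by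
        simpa [betaA, hβ0.ne'] using betaA_div_eq_sum_add hβ0.ne' 0 i
    _ < ∑ j ∈ Finset.range (i + 1), (v j : ℝ) / β ^ (j + 1) := by
        rw [Finset.sum_range_succ, Finset.sum_congr rfl fun j hj => by
          rw [hpre j (Finset.mem_range.1 hj)]]
        gcongr
    _ ≤ fword v β := (summable_fword hM hβ).sum_le_tsum _ fun j _ => by positivity

lemma lexLt_trichotomy (v w : ℕ → ℕ) : LexLt v w ∨ v = w ∨ LexLt w v :=
  lt_trichotomy (toLex v) (toLex w)

lemma lexLe_betaExp_of_fword_le_one {v : ℕ → ℕ} {M : ℕ} (hM : ∀ i, v i ≤ M) (hβ : 1 < β)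
    (h : fword v β ≤ 1) : LexLe v (betaExp β) := by
  rcases lexLt_trichotomy v (betaExp β) with hlt | heq | hgt
  · exact Or.inl hlt
  · exact Or.inr heq
  · exact absurd h (one_lt_fword_of_lexLt hM hβ hgt).not_ge

lemma lexLt_betaExp_of_fword_lt_one {v : ℕ → ℕ} {M : ℕ} (hM : ∀ i, v i ≤ M) (hβ : 1 < β)
    (h : fword v β < 1) : LexLt v (betaExp β) := by
  refine (lexLe_betaExp_of_fword_le_one hM hβ h.le).resolve_right ?_
  rintro rfl
  exact h.ne (fword_betaExp hβ)

end BetaExpansion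

/-- Let `β > 1` and let `a` be the β-expansion of `β`. Then:
(i) every word `v` with `B̂(v) ≤ β` satisfies `v ≤ a` lexicographically;
(ii) every word `v` with `B̂(v) < β` satisfies `v < a` lexicographically;
(iii) for every `k ≥ 1`, `B̂(σ^k a) < β` and `σ^k a < a` lexicographically. -/
theorem stmt_15 (β : ℝ) (hβ : 1 < β) :
    (∀ v : ℕ → ℕ, IsWord v → Bhat v ≤ β → LexLe v (betaExp β)) ∧
      (∀ v : ℕ → ℕ, IsWord v → Bhat v < β → LexLt v (betaExp β)) ∧
      (∀ k : ℕ, 1 ≤ k →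
        Bhat (shift k (betaExp β)) < β ∧ LexLt (shift k (betaExp β)) (betaExp β)) := by
  have lexLt_of_Bhat_lt : ∀ v, IsWord v → Bhat v < β → LexLt v (betaExp β) :=
    fun v ⟨M, hM⟩ h => lexLt_betaExp_of_fword_lt_one hM hβ ((Bhat_lt_iff hM hβ).1 h)
  refine ⟨fun v ⟨M, hM⟩ h => lexLe_betaExp_of_fword_le_one hM hβ
    (fword_le_one_of_Bhat_le hM hβ h), lexLt_of_Bhat_lt, fun k hk => ?_⟩
  obtain ⟨k, rfl⟩ := Nat.exists_eq_add_of_le' hk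
  have hM : ∀ i, shift (k + 1) (betaExp β) i ≤ ⌊β⌋₊ :=
    fun i => betaExp_le_floor (one_pos.trans hβ) _
  have hB : Bhat (shift (k + 1) (betaExp β)) < β := by
    rw [Bhat_lt_iff hM hβ, fword_shift_betaExp hβ, div_lt_one (one_pos.trans hβ)]
    exact betaA_succ_lt (one_pos.trans hβ) k
  exact ⟨hB, lexLt_of_Bhat_lt _ ⟨_, hM⟩ hB⟩
end

section
/- Let w be a word that is not identically zero, and let i ≥ 1. Let u be the word defined by u_j = w_j for 0 ≤ j < i−1, u_{i−1} = w_{i−1} + 1, and u_j = 0 for j ≥ i. Then B̂(σ^i w) ≤ B̂(w) if and only if B̂(w) ≤ B̂(u); likewise, B̂(σ^i w) < B̂(w) if and only if B̂(w) < B̂(u). -/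
/-!
Splitting the series after `i` letters gives `f_w = P + β⁻ⁱ f_{σⁱw}` and `f_u = P + β⁻ⁱ` with
the same finite part `P`, so at `β = B̂(w)`, where `f_w(β) = 1`,
`f_u(β) - 1 = β⁻ⁱ (1 - f_{σⁱw}(β))`. Since each `f_v` is continuous and decreasing,
`B̂(v) ≤ β ↔ f_v(β) ≤ 1` and `B̂(v) < β ↔ f_v(β) < 1` at every `β ≥ 1` where the series converges,
and both equivalences reduce to the sign of that identity. The series for `w` does converge at
`β = B̂(w)`, even when `B̂(w) = 1`: its partial sums are limits of partial sums at larger `β`,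
all bounded by `1`.
-/

open Finset Filter Topology

section Bhat

variable {v : ℕ → ℕ} {β β₁ β₂ : ℝ}

lemma hasSum_const_div_pow_succ (M : ℝ) (hβ : 1 < β) :
    HasSum (fun j : ℕ => M / β ^ (j + 1)) (M / (β - 1)) := by
  have hβ0 : 0 < β := by linarith
  have hgeom := (hasSum_geometric_of_lt_one (r := 1 / β) (by positivity)
    ((div_lt_one hβ0).2 hβ)).mul_left (M / β)
  have hterm : (fun j : ℕ => M / β ^ (j + 1)) = fun j => M / β * (1 / β) ^ j := by
    ext j
    rw [one_div_pow, pow_succ]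
    field_simp
  have hsum : M / (β - 1) = M / β * (1 - 1 / β)⁻¹ := by
    field_simp
  rwa [hterm, hsum]

lemma summable_fword_of_isWord (hv : IsWord v) (hβ : 1 < β) :
    Summable fun j => (v j : ℝ) / β ^ (j + 1) := by
  obtain ⟨M, hM⟩ := hv
  refine (hasSum_const_div_pow_succ M hβ).summable.of_nonneg_of_le (fun j => by positivity)
    fun j => ?_
  gcongr
  exact_mod_cast hM j

lemma exists_fword_le_one (hv : IsWord v) : ∃ β, 1 < β ∧ fword v β ≤ 1 := by
  obtain ⟨M, hM⟩ := hv
  have hβ : (1 : ℝ) < M + 2 := by linarith [(M.cast_nonneg : (0 : ℝ) ≤ M)]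
  refine ⟨M + 2, hβ, ?_⟩
  calc fword v (M + 2) ≤ ∑' j : ℕ, (M : ℝ) / (M + 2) ^ (j + 1) :=
        (summable_fword_of_isWord ⟨M, hM⟩ hβ).tsum_le_tsum
          (fun j => by gcongr; exact_mod_cast hM j) (hasSum_const_div_pow_succ M hβ).summable
    _ = M / (M + 2 - 1) := (hasSum_const_div_pow_succ M hβ).tsum_eq
    _ ≤ 1 := by rw [div_le_one (by positivity)]; linarith

lemma summable_fword_of_le (hs : Summable fun j => (v j : ℝ) / β₁ ^ (j + 1)) (hβ₁ : 0 < β₁)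
    (h : β₁ ≤ β₂) : Summable fun j => (v j : ℝ) / β₂ ^ (j + 1) :=
  hs.of_nonneg_of_le (fun j => by have := hβ₁.trans_le h; positivity) fun j => by gcongr

lemma fword_le_fword (hs : Summable fun j => (v j : ℝ) / β₁ ^ (j + 1)) (hβ₁ : 0 < β₁)
    (h : β₁ ≤ β₂) : fword v β₂ ≤ fword v β₁ :=
  (summable_fword_of_le hs hβ₁ h).tsum_le_tsum (fun j => by gcongr) hs

lemma fword_lt_fword_s18 (hv0 : v ≠ fun _ => 0) (hs : Summable fun j => (v j : ℝ) / β₁ ^ (j + 1))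
    (hβ₁ : 0 < β₁) (h : β₁ < β₂) : fword v β₂ < fword v β₁ := by
  obtain ⟨j, hj⟩ := Function.ne_iff.1 hv0
  refine (summable_fword_of_le hs hβ₁ h.le).tsum_lt_tsum (i := j) (fun j => by gcongr) ?_ hs
  exact div_lt_div_of_pos_left (by positivity) (by positivity)
    (pow_lt_pow_left₀ h hβ₁.le (Nat.succ_ne_zero j))

lemma continuousAt_fword_s18 (hv : IsWord v) (hβ : 1 < β) : ContinuousAt (fword v) β := by
  obtain ⟨M, hM⟩ := hv
  obtain ⟨β₀, hβ₀, hβ₀β⟩ := exists_between hβ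
  refine (continuousOn_tsum (u := fun j => (M : ℝ) / β₀ ^ (j + 1)) (fun j => ?_)
    (hasSum_const_div_pow_succ M hβ₀).summable (fun j x hx => ?_)).continuousAt
    (Ici_mem_nhds hβ₀β)
  · exact continuousOn_const.div (continuousOn_pow _)
      fun x hx => pow_ne_zero _ (by linarith [Set.mem_Ici.1 hx])
  · have hx : β₀ ≤ x := hx
    have hx0 : 0 < x := by linarith
    rw [Real.norm_of_nonneg (by positivity)]
    gcongr
    exact_mod_cast hM j

lemma Bhat_of_ne_zero (hv0 : v ≠ fun _ => 0) :
    Bhat v = sInf {β : ℝ | 1 < β ∧ fword v β ≤ 1} :=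
  if_neg hv0

lemma one_le_Bhat (hv : IsWord v) (hv0 : v ≠ fun _ => 0) : 1 ≤ Bhat v := by
  rw [Bhat_of_ne_zero hv0]
  exact le_csInf (exists_fword_le_one hv) fun β hβ => hβ.1.le

lemma Bhat_le_of_fword_le (hβ : 1 < β) (h : fword v β ≤ 1) : Bhat v ≤ β := by
  unfold Bhat
  split_ifs
  · linarith
  · exact csInf_le ⟨1, fun β hβ => hβ.1.le⟩ ⟨hβ, h⟩

lemma exists_fword_le_one_of_Bhat_lt (hv : IsWord v) (hv0 : v ≠ fun _ => 0) (h : Bhat v < β) :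
    ∃ β' < β, 1 < β' ∧ fword v β' ≤ 1 := by
  rw [Bhat_of_ne_zero hv0] at h
  obtain ⟨β', hβ', hβ'β⟩ := exists_lt_of_csInf_lt (exists_fword_le_one hv) h
  exact ⟨β', hβ'β, hβ'⟩

lemma fword_le_one_of_Bhat_lt (hv : IsWord v) (h : Bhat v < β) : fword v β ≤ 1 := by
  rcases eq_or_ne v (fun _ => 0) with rfl | hv0
  · simp [fword]
  obtain ⟨β', hβ'β, hβ', hf⟩ := exists_fword_le_one_of_Bhat_lt hv hv0 h
  exact (fword_le_fword (summable_fword_of_isWord hv hβ') (by linarith) hβ'β.le).trans hf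

lemma sum_range_le_one_of_Bhat_le (hv : IsWord v) (hβ : 0 < β) (h : Bhat v ≤ β) (n : ℕ) :
    ∑ j ∈ range n, (v j : ℝ) / β ^ (j + 1) ≤ 1 := by
  rcases eq_or_ne v (fun _ => 0) with rfl | hv0
  · simp
  have hcont : ContinuousAt (fun b : ℝ => ∑ j ∈ range n, (v j : ℝ) / b ^ (j + 1)) β := by
    fun_prop (disch := exact pow_ne_zero _ hβ.ne')
  refine le_of_tendsto (hcont.tendsto.mono_left (nhdsWithin_le_nhds (s := Set.Ioi β))) ?_
  filter_upwards [self_mem_nhdsWithin] with b hb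
  have hb1 : 1 < b := by linarith [one_le_Bhat hv hv0, Set.mem_Ioi.1 hb]
  exact ((summable_fword_of_isWord hv hb1).sum_le_tsum _ (fun j _ => by positivity)).trans
    (fword_le_one_of_Bhat_lt hv (h.trans_lt hb))

lemma summable_fword_of_Bhat_le (hv : IsWord v) (hβ : 0 < β) (h : Bhat v ≤ β) :
    Summable fun j => (v j : ℝ) / β ^ (j + 1) :=
  summable_of_sum_range_le (fun j => by positivity) (sum_range_le_one_of_Bhat_le hv hβ h)

lemma Bhat_le_iff (hv : IsWord v) (hβ : 1 ≤ β) (hs : Summable fun j => (v j : ℝ) / β ^ (j + 1)) :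
    Bhat v ≤ β ↔ fword v β ≤ 1 := by
  refine ⟨fun h => Real.tsum_le_of_sum_range_le (fun j => by positivity)
    (sum_range_le_one_of_Bhat_le hv (by linarith) h), fun h => ?_⟩
  refine le_of_forall_gt_imp_ge_of_dense fun β' hβ' => Bhat_le_of_fword_le (by linarith) ?_
  exact (fword_le_fword hs (by linarith) hβ'.le).trans h

lemma Bhat_lt_iff_s18 (hv : IsWord v) (hβ : 1 ≤ β) (hs : Summable fun j => (v j : ℝ) / β ^ (j + 1)) :
    Bhat v < β ↔ fword v β < 1 := by
  rcases eq_or_ne v (fun _ => 0) with rfl | hv0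
  · simp only [Bhat, if_pos, fword, Nat.cast_zero, zero_div, tsum_zero]
    constructor <;> intro <;> linarith
  constructor
  · intro h
    obtain ⟨β', hβ'β, hβ', hf⟩ := exists_fword_le_one_of_Bhat_lt hv hv0 h
    exact (fword_lt_fword_s18 hv0 (summable_fword_of_isWord hv hβ') (by linarith) hβ'β).trans_le hf
  · intro h
    have hβ1 : 1 < β := by
      -- at `β = 1` the series is the letter sum of `v`, which is at least `1`
      refine hβ.lt_of_ne fun hβ1 => ?_
      subst hβ1
      obtain ⟨j, hj⟩ := Function.ne_iff.1 hv0
      have hj1 : (1 : ℝ) ≤ v j := by exact_mod_cast Nat.one_le_iff_ne_zero.2 hj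
      have hle : (v j : ℝ) / 1 ^ (j + 1) ≤ fword v 1 := hs.le_tsum j fun _ _ => by positivity
      rw [one_pow, div_one] at hle
      exact absurd h (not_lt.2 (hj1.trans hle))
    have hnear : ∀ᶠ x in 𝓝 β, fword v x < 1 ∧ 1 < x :=
      ((continuousAt_fword_s18 hv hβ1).eventually (gt_mem_nhds h)).and (Ioi_mem_nhds hβ1)
    obtain ⟨β', ⟨hf, hβ'⟩, hβ'β⟩ :=
      ((hnear.filter_mono nhdsWithin_le_nhds).and (self_mem_nhdsWithin (s := Set.Iio β))).exists
    exact (Bhat_le_of_fword_le hβ' hf.le).trans_lt hβ'β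

lemma fword_Bhat_eq_one (hv : IsWord v) (hv0 : v ≠ fun _ => 0) : fword v (Bhat v) = 1 := by
  have h1 := one_le_Bhat hv hv0
  have hs := summable_fword_of_Bhat_le hv (by linarith) le_rfl
  exact le_antisymm ((Bhat_le_iff hv h1 hs).1 le_rfl)
    (not_lt.1 fun h => ((Bhat_lt_iff_s18 hv h1 hs).2 h).false)

end Bhat

section Words

variable {v w u : ℕ → ℕ} {β : ℝ}

lemma IsWord.shift (hv : IsWord v) (i : ℕ) : IsWord (shift i v) :=
  let ⟨M, hM⟩ := hv; ⟨M, fun j => hM (j + i)⟩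

lemma summable_fword_shift (hβ : β ≠ 0) (hs : Summable fun j => (v j : ℝ) / β ^ (j + 1))
    (i : ℕ) : Summable fun j => (shift i v j : ℝ) / β ^ (j + 1) := by
  rw [← summable_div_const_iff (pow_ne_zero i hβ)]
  refine ((summable_nat_add_iff i).2 hs).congr fun j => ?_
  rw [shift, div_div, ← pow_add, add_right_comm]

lemma fword_eq_sum_add_fword_shift (hs : Summable fun j => (v j : ℝ) / β ^ (j + 1)) (i : ℕ) :
    fword v β = ∑ j ∈ range i, (v j : ℝ) / β ^ (j + 1) + fword (shift i v) β / β ^ i := by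
  rw [fword, ← hs.sum_add_tsum_nat_add i, fword, ← tsum_div_const]
  congr 1
  refine tsum_congr fun j => ?_
  rw [shift, div_div, ← pow_add, add_right_comm]

variable {k : ℕ}

lemma IsWord.of_eq_ite (hw : IsWord w)
    (hu : ∀ j, u j = if j < k then w j else if j = k then w k + 1 else 0) : IsWord u := by
  obtain ⟨M, hM⟩ := hw
  refine ⟨M + 1, fun j => ?_⟩
  rw [hu]
  split_ifs
  · exact (hM j).trans M.le_succ
  · exact Nat.succ_le_succ (hM k)
  · exact Nat.zero_le _

lemma hasSum_fword_of_eq_ite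
    (hu : ∀ j, u j = if j < k then w j else if j = k then w k + 1 else 0) (β : ℝ) :
    HasSum (fun j => (u j : ℝ) / β ^ (j + 1))
      (∑ j ∈ range (k + 1), (w j : ℝ) / β ^ (j + 1) + 1 / β ^ (k + 1)) := by
  have hzero : ∀ j ∉ range (k + 1), (u j : ℝ) / β ^ (j + 1) = 0 := by
    intro j hj
    rw [mem_range, not_lt] at hj
    rw [hu, if_neg (by omega), if_neg (by omega), Nat.cast_zero, zero_div]
  have hinit : ∑ j ∈ range k, (u j : ℝ) / β ^ (j + 1) = ∑ j ∈ range k, (w j : ℝ) / β ^ (j + 1) :=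
    sum_congr rfl fun j hj => by rw [hu j, if_pos (mem_range.1 hj)]
  have hsum : ∑ j ∈ range (k + 1), (u j : ℝ) / β ^ (j + 1) =
      ∑ j ∈ range (k + 1), (w j : ℝ) / β ^ (j + 1) + 1 / β ^ (k + 1) := by
    rw [sum_range_succ, sum_range_succ, hinit, hu k, if_neg (lt_irrefl k), if_pos rfl]
    push_cast
    ring
  exact hsum ▸ hasSum_sum_of_ne_finset_zero hzero

end Words

/-- Let `w` be a word that is not identically zero and `i ≥ 1`. Let `u` be the
word `w_0 … w_{i-2} (w_{i-1}+1) 0^∞`. Then `B̂(σ^i w) ≤ B̂(w)` iff `B̂(w) ≤ B̂(u)`;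
likewise, `B̂(σ^i w) < B̂(w)` iff `B̂(w) < B̂(u)`. -/
theorem stmt_18 (w : ℕ → ℕ) (hw : IsWord w) (hw0 : w ≠ fun _ => 0)
    (i : ℕ) (hi : 1 ≤ i) (u : ℕ → ℕ)
    (hu : ∀ j : ℕ, u j =
      if j < i - 1 then w j else if j = i - 1 then w (i - 1) + 1 else 0) :
    (Bhat (shift i w) ≤ Bhat w ↔ Bhat w ≤ Bhat u) ∧
      (Bhat (shift i w) < Bhat w ↔ Bhat w < Bhat u) := by
  obtain ⟨k, rfl⟩ := Nat.exists_eq_add_of_le' hi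
  simp only [Nat.add_sub_cancel] at hu
  set β := Bhat w
  have hβ : 1 ≤ β := one_le_Bhat hw hw0
  have hpow : 0 < β ^ (k + 1) := by positivity
  have hsw := summable_fword_of_Bhat_le hw (by linarith) le_rfl
  have hss := summable_fword_shift (by linarith) hsw (k + 1)
  have hfu := hasSum_fword_of_eq_ite hu β
  have hwu := hw.of_eq_ite hu
  have key : fword u β - 1 = (1 - fword (shift (k + 1) w) β) / β ^ (k + 1) := by
    have hsplit := fword_eq_sum_add_fword_shift hsw (k + 1)
    rw [fword_Bhat_eq_one hw hw0] at hsplit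
    rw [fword, hfu.tsum_eq]
    linear_combination -hsplit
  have hle : β ≤ Bhat u ↔ fword (shift (k + 1) w) β ≤ 1 := by
    rw [← not_lt, Bhat_lt_iff_s18 hwu hβ hfu.summable, not_lt, ← sub_nonneg, key, le_div_iff₀ hpow,
      zero_mul, sub_nonneg]
  have hlt : β < Bhat u ↔ fword (shift (k + 1) w) β < 1 := by
    rw [← not_le, Bhat_le_iff hwu hβ hfu.summable, not_le, ← sub_pos, key, lt_div_iff₀ hpow,
      zero_mul, sub_pos]
  rw [hle, hlt, Bhat_le_iff (hw.shift _) hβ hss, Bhat_lt_iff_s18 (hw.shift _) hβ hss]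
  exact ⟨Iff.rfl, Iff.rfl⟩
end
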